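/- arXiv:math/0009135 — 2 statements merged into one kernel-verified Lean document; each statement's English description precedes it below -/
import Mathlib

section
/- The Orlik–Solomon ideal I is stable under the boundary map: ∂(I) ⊆ I. -/
open ExteriorAlgebra

variable (K : Type*) [Field K] {n : ℕ}

/-- The generator `e i` of the exterior algebra `E = Λ(e_1,…,e_n)`. -/
noncomputable def gen (i : Fin n) : ExteriorAlgebra K (Fin n → K) :=
  ι K (Pi.single i 1)

/-- The monomial `e_S = e_{i_1} ∧ ⋯ ∧ e_{i_p}` for a tuple `S` given as a list. -/
noncomputable def eS (l : List (Fin n)) : ExteriorAlgebra K (Fin n → K) :=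
  (l.map (gen K)).prod

/-- `D` is the boundary map `∂`: it is linear and satisfies
`∂(e_{i_1} ∧ ⋯ ∧ e_{i_p}) = ∑ k (-1)^{k-1} e_{i_1} ∧ ⋯ ∧ ê_{i_k} ∧ ⋯ ∧ e_{i_p}`
(indexing the sum from `0`, the sign of the `k`-th term is `(-1)^k`). -/
def IsBoundary (D : ExteriorAlgebra K (Fin n → K) →ₗ[K] ExteriorAlgebra K (Fin n → K)) :
    Prop :=
  ∀ l : List (Fin n),
    D (eS K l) = ∑ k : Fin l.length, ((-1 : K) ^ (k : ℕ)) • eS K (l.eraseIdx k)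

/-- A circuit of a matroid: a minimal dependent set. -/
def IsCircuit {α : Type*} (M : Matroid α) (C : Set α) : Prop :=
  M.Dep C ∧ ∀ C' ⊂ C, ¬ M.Dep C'

/-- A simple matroid: every subset with at most two elements is independent
(no loops and no parallel points). -/
def MatroidSimple {α : Type*} (M : Matroid α) : Prop :=
  ∀ i j : α, M.Indep {i, j}

/-- The Orlik–Solomon ideal `I` of a matroid `G`: the ideal of the exterior algebra
generated by the boundaries `∂ e_S` of dependent tuples `S`. -/
noncomputable def OSIdeal (M : Matroid (Fin n))
    (D : ExteriorAlgebra K (Fin n → K) →ₗ[K] ExteriorAlgebra K (Fin n → K)) :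
    TwoSidedIdeal (ExteriorAlgebra K (Fin n → K)) :=
  TwoSidedIdeal.span
    {x | ∃ l : List (Fin n), l.Nodup ∧ M.Dep {i | i ∈ l} ∧ x = D (eS K l)}

/-- The defining relation of the Orlik–Solomon algebra `A(G) = E/I`:
each generator `∂ e_S` (`S` dependent) is set to zero. -/
def OSRel (M : Matroid (Fin n))
    (D : ExteriorAlgebra K (Fin n → K) →ₗ[K] ExteriorAlgebra K (Fin n → K)) :
    ExteriorAlgebra K (Fin n → K) → ExteriorAlgebra K (Fin n → K) → Prop :=
  fun x y => y = 0 ∧ ∃ l : List (Fin n), l.Nodup ∧ M.Dep {i | i ∈ l} ∧ x = D (eS K l)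

/-- The Orlik–Solomon algebra `A(G) = E/I`. -/
noncomputable abbrev OSAlgebra (M : Matroid (Fin n))
    (D : ExteriorAlgebra K (Fin n → K) →ₗ[K] ExteriorAlgebra K (Fin n → K)) :=
  RingQuot (OSRel K M D)

/-- The image `a_i` of the generator `e_i` in the Orlik–Solomon algebra. -/
noncomputable def aGen (M : Matroid (Fin n))
    (D : ExteriorAlgebra K (Fin n → K) →ₗ[K] ExteriorAlgebra K (Fin n → K))
    (i : Fin n) : OSAlgebra K M D :=
  RingQuot.mkAlgHom K (OSRel K M D) (gen K i)

lemma eS_nil : eS K ([] : List (Fin n)) = 1 := rfl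

lemma eS_cons (i : Fin n) (l : List (Fin n)) : eS K (i :: l) = gen K i * eS K l := by
  simp [eS]

lemma eS_append (a b : List (Fin n)) : eS K (a ++ b) = eS K a * eS K b := by
  simp [eS]

variable {D : ExteriorAlgebra K (Fin n → K) →ₗ[K] ExteriorAlgebra K (Fin n → K)}

lemma D_one (hD : IsBoundary K D) : D 1 = 0 := by
  have := hD []
  simpa [eS_nil] using this

lemma D_cons (hD : IsBoundary K D) (i : Fin n) (l : List (Fin n)) :
    D (eS K (i :: l)) = eS K l - gen K i * D (eS K l) := by
  rw [hD, hD]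
  rw [show (i :: l).length = l.length + 1 from rfl, Fin.sum_univ_succ]
  simp only [Fin.val_zero, pow_zero, one_smul, List.eraseIdx_cons_zero, Fin.val_succ,
    List.eraseIdx_cons_succ, eS_cons, pow_succ, Finset.mul_sum, mul_smul_comm]
  ring_nf
  rw [sub_eq_add_neg, ← Finset.sum_neg_distrib]
  congr 1
  simp [neg_smul]

lemma mem_spanES_mul {x y : ExteriorAlgebra K (Fin n → K)}
    (hx : x ∈ Submodule.span K (Set.range (eS K (n := n))))
    (hy : y ∈ Submodule.span K (Set.range (eS K (n := n)))) :
    x * y ∈ Submodule.span K (Set.range (eS K (n := n))) := by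
  induction hx using Submodule.span_induction with
  | mem a ha =>
    obtain ⟨la, rfl⟩ := ha
    induction hy using Submodule.span_induction with
    | mem b hb =>
      obtain ⟨lb, rfl⟩ := hb
      exact Submodule.subset_span ⟨la ++ lb, eS_append K la lb⟩
    | zero => simp
    | add y z _ _ hy hz => rw [mul_add]; exact Submodule.add_mem _ hy hz
    | smul a y _ hy => rw [mul_smul_comm]; exact Submodule.smul_mem _ _ hy
  | zero => simp
  | add a b _ _ ha hb => rw [add_mul]; exact Submodule.add_mem _ ha hb
  | smul a b _ hb => rw [smul_mul_assoc]; exact Submodule.smul_mem _ _ hb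

lemma span_eS_top : Submodule.span K (Set.range (eS K (n := n))) = ⊤ := by
  rw [eq_top_iff]
  rintro x -
  induction x using ExteriorAlgebra.induction with
  | algebraMap r =>
    rw [Algebra.algebraMap_eq_smul_one]
    exact Submodule.smul_mem _ _ (Submodule.subset_span ⟨[], rfl⟩)
  | ι v =>
    have hv : v = ∑ i, v i • (Pi.single i (1 : K) : Fin n → K) := by
      ext j; simp [Finset.sum_apply, Pi.single_apply]
    rw [hv, map_sum]
    refine Submodule.sum_mem _ fun i _ => ?_
    rw [map_smul]
    refine Submodule.smul_mem _ _ (Submodule.subset_span ⟨[i], ?_⟩)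
    simp [eS, gen]
  | mul x y hx hy => exact mem_spanES_mul K hx hy
  | add x y hx hy => exact Submodule.add_mem _ hx hy

lemma D_gen_mul (hD : IsBoundary K D) (i : Fin n) (z : ExteriorAlgebra K (Fin n → K)) :
    D (gen K i * z) = z - gen K i * D z := by
  have hz : z ∈ Submodule.span K (Set.range (eS K (n := n))) := by
    rw [span_eS_top]; trivial
  induction hz using Submodule.span_induction with
  | mem a ha =>
    obtain ⟨l, rfl⟩ := ha
    rw [← eS_cons, D_cons K hD]
  | zero => simp
  | add a b _ _ ha hb =>
    rw [mul_add, map_add, ha, hb, map_add, mul_add]; abel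
  | smul c a _ ha =>
    rw [mul_smul_comm, map_smul, ha, map_smul, smul_sub, mul_smul_comm]

lemma D_D_eS (hD : IsBoundary K D) (l : List (Fin n)) : D (D (eS K l)) = 0 := by
  induction l with
  | nil => rw [eS_nil, D_one K hD, map_zero]
  | cons i l ih =>
    rw [D_cons K hD, map_sub, D_gen_mul K hD, ih, mul_zero, sub_zero, sub_self]

lemma D_leib (hD : IsBoundary K D) (l : List (Fin n)) (x : ExteriorAlgebra K (Fin n → K)) :
    D (eS K l * x) = D (eS K l) * x + ((-1 : K) ^ l.length) • (eS K l * D x) := by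
  induction l with
  | nil => simp [eS_nil, D_one K hD]
  | cons i l ih =>
    rw [eS_cons, mul_assoc, D_gen_mul K hD, ih, ← eS_cons, D_cons K hD, sub_mul, mul_add,
      List.length_cons, pow_succ, mul_smul_comm, ← smul_smul]
    simp only [eS_cons, mul_assoc]
    module

lemma D_D_mul (hD : IsBoundary K D) (l m : List (Fin n)) :
    D (D (eS K l) * eS K m)
      = ((-1 : K) ^ (l.length - 1)) • (D (eS K l) * D (eS K m)) := by
  have hlen : ∀ k : Fin l.length, (l.eraseIdx (k : ℕ)).length = l.length - 1 := by
    intro k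
    rw [List.length_eraseIdx]
    simp [k.isLt]
  conv_lhs => rw [hD l, Finset.sum_mul]
  simp only [smul_mul_assoc, map_sum, map_smul, D_leib K hD, hlen]
  simp only [smul_add, Finset.sum_add_distrib]
  have h1 : ∑ k : Fin l.length,
      ((-1 : K) ^ (k : ℕ)) • (D (eS K (l.eraseIdx (k : ℕ))) * eS K m) = 0 := by
    have : ∑ k : Fin l.length,
        ((-1 : K) ^ (k : ℕ)) • (D (eS K (l.eraseIdx (k : ℕ))) * eS K m)
        = (∑ k : Fin l.length, ((-1 : K) ^ (k : ℕ)) • D (eS K (l.eraseIdx (k : ℕ)))) * eS K m := by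
      rw [Finset.sum_mul]
      simp only [smul_mul_assoc]
    rw [this]
    simp only [← map_smul, ← map_sum]
    rw [← hD l, D_D_eS K hD, zero_mul]
  rw [h1, zero_add]
  have h3 : ∀ k : Fin l.length,
      ((-1 : K) ^ (k : ℕ)) • (((-1 : K) ^ (l.length - 1)) • (eS K (l.eraseIdx (k : ℕ)) * D (eS K m)))
      = ((-1 : K) ^ (l.length - 1)) • (((-1 : K) ^ (k : ℕ)) • eS K (l.eraseIdx (k : ℕ)) * D (eS K m)) := by
    intro k
    rw [smul_comm, smul_mul_assoc]
  simp only [h3, ← Finset.smul_sum, ← Finset.sum_mul]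
  rw [← hD l]

/-- Auxiliary generating set for the OS ideal, as a `K`-submodule. -/
def OSgenSet (M : Matroid (Fin n))
    (D : ExteriorAlgebra K (Fin n → K) →ₗ[K] ExteriorAlgebra K (Fin n → K)) :
    Set (ExteriorAlgebra K (Fin n → K)) :=
  {x | ∃ t l m : List (Fin n), l.Nodup ∧ M.Dep {i | i ∈ l} ∧
    x = eS K t * (D (eS K l) * eS K m)}

lemma OSJ_mul_eS_left (M : Matroid (Fin n)) (a : List (Fin n))
    {x : ExteriorAlgebra K (Fin n → K)}
    (hx : x ∈ Submodule.span K (OSgenSet K M D)) :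
    eS K a * x ∈ Submodule.span K (OSgenSet K M D) := by
  induction hx using Submodule.span_induction with
  | mem y hy =>
    obtain ⟨t, l, m, hnd, hdep, rfl⟩ := hy
    rw [← mul_assoc, ← eS_append]
    exact Submodule.subset_span ⟨a ++ t, l, m, hnd, hdep, rfl⟩
  | zero => simp
  | add y z _ _ hy hz => rw [mul_add]; exact Submodule.add_mem _ hy hz
  | smul c y _ hy => rw [mul_smul_comm]; exact Submodule.smul_mem _ _ hy

lemma OSJ_mul_eS_right (M : Matroid (Fin n)) (a : List (Fin n))
    {x : ExteriorAlgebra K (Fin n → K)}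
    (hx : x ∈ Submodule.span K (OSgenSet K M D)) :
    x * eS K a ∈ Submodule.span K (OSgenSet K M D) := by
  induction hx using Submodule.span_induction with
  | mem y hy =>
    obtain ⟨t, l, m, hnd, hdep, rfl⟩ := hy
    rw [mul_assoc, mul_assoc, ← eS_append]
    exact Submodule.subset_span ⟨t, l, m ++ a, hnd, hdep, rfl⟩
  | zero => simp
  | add y z _ _ hy hz => rw [add_mul]; exact Submodule.add_mem _ hy hz
  | smul c y _ hy => rw [smul_mul_assoc]; exact Submodule.smul_mem _ _ hy

lemma OSJ_mul_left (M : Matroid (Fin n)) (a : ExteriorAlgebra K (Fin n → K))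
    {x : ExteriorAlgebra K (Fin n → K)}
    (hx : x ∈ Submodule.span K (OSgenSet K M D)) :
    a * x ∈ Submodule.span K (OSgenSet K M D) := by
  have ha : a ∈ Submodule.span K (Set.range (eS K (n := n))) := by
    rw [span_eS_top]; trivial
  induction ha using Submodule.span_induction with
  | mem y hy => obtain ⟨t, rfl⟩ := hy; exact OSJ_mul_eS_left K M t hx
  | zero => simp
  | add y z _ _ hy hz => rw [add_mul]; exact Submodule.add_mem _ hy hz
  | smul c y _ hy => rw [smul_mul_assoc]; exact Submodule.smul_mem _ _ hy

lemma OSJ_mul_right (M : Matroid (Fin n)) (a : ExteriorAlgebra K (Fin n → K))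
    {x : ExteriorAlgebra K (Fin n → K)}
    (hx : x ∈ Submodule.span K (OSgenSet K M D)) :
    x * a ∈ Submodule.span K (OSgenSet K M D) := by
  have ha : a ∈ Submodule.span K (Set.range (eS K (n := n))) := by
    rw [span_eS_top]; trivial
  induction ha using Submodule.span_induction with
  | mem y hy => obtain ⟨t, rfl⟩ := hy; exact OSJ_mul_eS_right K M t hx
  | zero => simp
  | add y z _ _ hy hz => rw [mul_add]; exact Submodule.add_mem _ hy hz
  | smul c y _ hy => rw [mul_smul_comm]; exact Submodule.smul_mem _ _ hy

lemma OSJ_D_stable (hD : IsBoundary K D) (M : Matroid (Fin n))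
    {x : ExteriorAlgebra K (Fin n → K)}
    (hx : x ∈ Submodule.span K (OSgenSet K M D)) :
    D x ∈ Submodule.span K (OSgenSet K M D) := by
  induction hx using Submodule.span_induction with
  | mem y hy =>
    obtain ⟨t, l, m, hnd, hdep, rfl⟩ := hy
    rw [D_leib K hD, D_D_mul K hD]
    refine Submodule.add_mem _ ?_ ?_
    · rw [hD t, Finset.sum_mul]
      refine Submodule.sum_mem _ fun j _ => ?_
      rw [smul_mul_assoc]
      exact Submodule.smul_mem _ _ (Submodule.subset_span ⟨_, l, m, hnd, hdep, rfl⟩)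
    · refine Submodule.smul_mem _ _ ?_
      rw [mul_smul_comm]
      refine Submodule.smul_mem _ _ ?_
      rw [hD m]
      simp only [Finset.mul_sum, mul_smul_comm]
      refine Submodule.sum_mem _ fun j _ => ?_
      exact Submodule.smul_mem _ _ (Submodule.subset_span ⟨t, l, _, hnd, hdep, rfl⟩)
  | zero => simp
  | add y z _ _ hy hz => rw [map_add]; exact Submodule.add_mem _ hy hz
  | smul c y _ hy => rw [map_smul]; exact Submodule.smul_mem _ _ hy

/-- the Orlik–Solomon ideal is stable under the boundary map: `∂(I) ⊆ I`. -/
theorem OSIdeal_stable_boundary (M : Matroid (Fin n)) (hE : M.E = Set.univ)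
    (hsimple : MatroidSimple M)
    (D : ExteriorAlgebra K (Fin n → K) →ₗ[K] ExteriorAlgebra K (Fin n → K))
    (hD : IsBoundary K D) :
    ∀ x ∈ OSIdeal K M D, D x ∈ OSIdeal K M D := by
  have hJI : ∀ x ∈ Submodule.span K (OSgenSet K M D), x ∈ OSIdeal K M D := by
    intro x hx
    induction hx using Submodule.span_induction with
    | mem y hy =>
      obtain ⟨t, l, m, hnd, hdep, rfl⟩ := hy
      refine TwoSidedIdeal.mul_mem_left _ _ _ (TwoSidedIdeal.mul_mem_right _ _ _ ?_)
      exact TwoSidedIdeal.subset_span ⟨l, hnd, hdep, rfl⟩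
    | zero => exact zero_mem _
    | add y z _ _ hy hz => exact add_mem hy hz
    | smul c y _ hy => rw [Algebra.smul_def]; exact TwoSidedIdeal.mul_mem_left _ _ _ hy
  have hIJ : ∀ x ∈ OSIdeal K M D, x ∈ Submodule.span K (OSgenSet K M D) := by
    intro x hx
    unfold OSIdeal at hx
    rw [TwoSidedIdeal.mem_span_iff] at hx
    let Jt : TwoSidedIdeal (ExteriorAlgebra K (Fin n → K)) :=
      TwoSidedIdeal.mk' (Submodule.span K (OSgenSet K M D) : Set _)
        (zero_mem _) (fun h1 h2 => add_mem h1 h2) (fun h => neg_mem h)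
        (fun h => OSJ_mul_left K M _ h) (fun h => OSJ_mul_right K M _ h)
    have hsub : {x | ∃ l : List (Fin n), l.Nodup ∧ M.Dep {i | i ∈ l} ∧ x = D (eS K l)}
        ⊆ (Jt : Set (ExteriorAlgebra K (Fin n → K))) := by
      rintro y ⟨l, hnd, hdep, rfl⟩
      rw [SetLike.mem_coe, TwoSidedIdeal.mem_mk']
      exact Submodule.subset_span ⟨[], l, [], hnd, hdep, by simp [eS_nil]⟩
    have hx' := hx Jt hsub
    rwa [TwoSidedIdeal.mem_mk'] at hx'
  intro x hx
  exact hJI _ (OSJ_D_stable K hD M (hIJ x hx))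
end

section
/- A set function η: {0,…,n} → {0,…,m} inducing a strong map of matroids G → G' (so that the image of every circuit of G is dependent in G') induces a well-defined graded algebra homomorphism A(G) → A(G') sending a_i to a_{η(i)}. -/
open ExteriorAlgebra

variable (K : Type*) [Field K] {n : ℕ}

/-! The map `η` extends linearly to the algebra map `η̂ : E → E'`, `e_S ↦ e_{η(S)}`, which
intertwines the boundary maps. A generator `∂ e_S` of `I` (`S` dependent) is thus sent to
`∂ e_{η(S)}`. If `η` identifies two points of `S` then `e_{η(S)} = 0`; otherwise `η(S)` contains
the image of a circuit contained in `S`, so it is dependent and `∂ e_{η(S)} ∈ I'`. Hence `η̂`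
descends to `A(G) → A(G')`. -/

theorem Matroid.IsCircuit.isCircuit {α : Type*} {M : Matroid α} {C : Set α} (hC : M.IsCircuit C) :
    _root_.IsCircuit M C :=
  ⟨hC.dep, fun _ hC' => hC.not_prop_of_lt hC'⟩

theorem Matroid.Dep.image {α β : Type*} {M : Matroid α} {M' : Matroid β}
    (hE' : M'.E = Set.univ) {η : α → β} (hη : ∀ C : Set α, _root_.IsCircuit M C → M'.Dep (η '' C))
    {S : Set α} (hS : M.Dep S) : M'.Dep (η '' S) := by
  obtain ⟨C, hCS, hC⟩ := hS.exists_isCircuit_subset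
  exact (hη C hC.isCircuit).superset (Set.image_mono hCS) (hE' ▸ Set.subset_univ _)

theorem eS_eq_ιMulti (l : List (Fin n)) :
    eS K l = ιMulti K l.length fun k => Pi.single (l.get k) 1 := by
  rw [ιMulti_apply, eS, ← List.ofFn_get (l.map (gen K))]
  simp [gen]

theorem eS_eq_zero_of_not_nodup {l : List (Fin n)} (hl : ¬ l.Nodup) : eS K l = 0 := by
  rw [eS_eq_ιMulti]
  refine AlternatingMap.map_eq_zero_of_not_injective _ _ fun hinj => hl ?_
  exact List.nodup_iff_injective_get.mpr fun a b hab => hinj (congrArg (Pi.single · 1) hab)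

theorem OSAlgebra.mk_boundary_eS_of_dep (M : Matroid (Fin n))
    (D : ExteriorAlgebra K (Fin n → K) →ₗ[K] ExteriorAlgebra K (Fin n → K))
    {l : List (Fin n)} (hl : M.Dep {i | i ∈ l}) :
    RingQuot.mkAlgHom K (OSRel K M D) (D (eS K l)) = 0 := by
  by_cases hnd : l.Nodup
  · exact RingQuot.mkAlgHom_rel K ⟨rfl, l, hnd, hl, rfl⟩ |>.trans (map_zero _)
  · rw [eS_eq_zero_of_not_nodup K hnd, map_zero, map_zero]

section

variable {m : ℕ}

noncomputable def exteriorMapOfFun (η : Fin n → Fin m) :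
    ExteriorAlgebra K (Fin n → K) →ₐ[K] ExteriorAlgebra K (Fin m → K) :=
  ExteriorAlgebra.map ((Pi.basisFun K (Fin n)).constr K fun i => Pi.single (η i) 1)

theorem exteriorMapOfFun_gen (η : Fin n → Fin m) (i : Fin n) :
    exteriorMapOfFun K η (gen K i) = gen K (η i) := by
  rw [exteriorMapOfFun, gen, map_apply_ι, ← Pi.basisFun_apply, Module.Basis.constr_basis, gen]

theorem exteriorMapOfFun_eS (η : Fin n → Fin m) (l : List (Fin n)) :
    exteriorMapOfFun K η (eS K l) = eS K (l.map η) := by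
  simp only [eS, map_list_prod, List.map_map]
  exact congrArg List.prod (List.map_congr_left fun i _ => exteriorMapOfFun_gen K η i)

theorem exteriorMapOfFun_boundary_eS (η : Fin n → Fin m)
    {D : ExteriorAlgebra K (Fin n → K) →ₗ[K] ExteriorAlgebra K (Fin n → K)} (hD : IsBoundary K D)
    {D' : ExteriorAlgebra K (Fin m → K) →ₗ[K] ExteriorAlgebra K (Fin m → K)} (hD' : IsBoundary K D')
    (l : List (Fin n)) :
    exteriorMapOfFun K η (D (eS K l)) = D' (eS K (l.map η)) := by
  rw [hD, hD', map_sum, ← Fin.sum_congr' _ (l.length_map η).symm]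
  refine Finset.sum_congr rfl fun k _ => ?_
  simp [exteriorMapOfFun_eS, List.eraseIdx_map]

end

theorem strong_map_induces_OS_hom {m : ℕ}
    (M : Matroid (Fin n))
    (M' : Matroid (Fin m)) (hE' : M'.E = Set.univ)
    (D : ExteriorAlgebra K (Fin n → K) →ₗ[K] ExteriorAlgebra K (Fin n → K))
    (hD : IsBoundary K D)
    (D' : ExteriorAlgebra K (Fin m → K) →ₗ[K] ExteriorAlgebra K (Fin m → K))
    (hD' : IsBoundary K D')
    (η : Fin n → Fin m)
    (hη : ∀ C : Set (Fin n), IsCircuit M C → M'.Dep (η '' C)) :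
    ∃ F : OSAlgebra K M D →ₐ[K] OSAlgebra K M' D',
      ∀ i : Fin n, F (aGen K M D i) = aGen K M' D' (η i) := by
  let φ := (RingQuot.mkAlgHom K (OSRel K M' D')).comp (exteriorMapOfFun K η)
  have hφ : ∀ ⦃x y⦄, OSRel K M D x y → φ x = φ y := by
    rintro _ _ ⟨rfl, l, -, hdep, rfl⟩
    have hdep' : M'.Dep {j | j ∈ l.map η} := by
      simpa [Set.image, eq_comm] using hdep.image hE' hη
    simp only [φ, AlgHom.comp_apply, exteriorMapOfFun_boundary_eS K η hD hD',
      OSAlgebra.mk_boundary_eS_of_dep K M' D' hdep', map_zero]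
  refine ⟨RingQuot.liftAlgHom K ⟨φ, hφ⟩, fun i => ?_⟩
  rw [aGen, RingQuot.liftAlgHom_mkAlgHom_apply, AlgHom.comp_apply, exteriorMapOfFun_gen, aGen]
end
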